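/- arXiv:math/0306218 — 4 statements merged into one kernel-verified Lean document; each statement's English description precedes it below -/
import Mathlib

section
/- Let P and P' be sequences of positive reals with φ_j(P,P) = Q_j and φ_j(P',P') = Q_j for all j ≥ 1 (all values finite), and suppose ln P'_k − ln P_k → 0 as k → ∞. Then P = P', i.e. P_k = P'_k for all k. -/
open Filter Asymptotics MeasureTheory
open scoped ENNReal Topology

/-- `Theta θ E' E` is the argument of the complex number `E' + E·e^{iθ}`;
for `0 < θ < π` and `E', E > 0` it lies in `(0, θ)` and equals
`arctan (sin θ / (E'/E + cos θ))` with the branch taken in `(0, θ)`. -/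
noncomputable def Theta (θ E' E : ℝ) : ℝ :=
  Complex.arg ((E' : ℂ) + (E : ℂ) * Complex.exp (θ * Complex.I))

/-- `phi θ X Y j = (1/π) · ∑_{k ≥ 1} Θ(X_k, Y_j) ∈ (0, ∞]`, where sequences are
indexed by `ℕ` and only the values at indices `k ≥ 1` are used. -/
noncomputable def phi (θ : ℝ) (X Y : ℕ → ℝ) (j : ℕ) : ℝ≥0∞ :=
  ENNReal.ofReal (1 / Real.pi) * ∑' k : ℕ, ENNReal.ofReal (Theta θ (X (k + 1)) (Y j))

/-- `Pker θ E E' = E·E' / (E² + 2·cos θ·E·E' + E'²)`. -/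
noncomputable def Pker (θ E E' : ℝ) : ℝ :=
  E * E' / (E ^ 2 + 2 * Real.cos θ * E * E' + E' ^ 2)

/-- The drift `D_α = (1/π) ∫_0^∞ Θ(s^α, 1) ds`. -/
noncomputable def Drift (θ α : ℝ) : ℝ :=
  (1 / Real.pi) * ∫ s in Set.Ioi (0 : ℝ), Theta θ (s ^ α) 1

/-- `S_ε = ∫_0^∞ s^{-ε} / (s^{α_θ} + 2 cos θ + s^{-α_θ}) ds` with `α_θ = 1 + θ/π`. -/
noncomputable def Sfun (θ ε : ℝ) : ℝ :=
  ∫ s in Set.Ioi (0 : ℝ), s ^ (-ε) /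
    (s ^ (1 + θ / Real.pi) + 2 * Real.cos θ + s ^ (-(1 + θ / Real.pi)))

/-!
A maximum principle. If `log P' - log P` is positive somewhere then, as it tends to `0`, it
attains a positive maximum at some `j`: with `c = P'_j / P_j` we get `P' ≤ c P`, with equality
at `j` and strict inequality for large `k`. Since `Θ` is invariant under a common rescaling and
strictly decreasing in its first argument, `Θ(P_k, P_j) = Θ(c P_k, P'_j) ≤ Θ(P'_k, P'_j)` for
all `k`, strictly for large `k`, so `φ_j(P, P) < φ_j(P', P')`, contradicting that both equal the
finite `Q_j`. Hence `P' ≤ P`, and `P ≤ P'` by symmetry.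
-/

open Real

lemma Complex.arg_mk_of_im_pos {x y : ℝ} (hy : 0 < y) :
    Complex.arg ⟨x, y⟩ = π / 2 - Real.arctan (x / y) := by
  have hratio : x / ‖(⟨x, y⟩ : ℂ)‖ = Real.sin (Real.arctan (x / y)) := by
    rw [Real.sin_arctan, Complex.norm_def, Complex.normSq_mk,
      show 1 + (x / y) ^ 2 = (x * x + y * y) / y ^ 2 by field_simp; ring,
      Real.sqrt_div' _ (sq_nonneg y), Real.sqrt_sq hy.le]
    field_simp
  rw [Complex.arg_of_im_pos hy, hratio, Real.arccos_eq_pi_div_two_sub_arcsin,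
    Real.arcsin_sin (Real.neg_pi_div_two_lt_arctan _).le (Real.arctan_lt_pi_div_two _).le]

section Theta

variable {θ : ℝ}

lemma theta_eq_pi_div_two_sub_arctan (hsin : 0 < sin θ) {E' E : ℝ} (hE : 0 < E) :
    Theta θ E' E = π / 2 - arctan ((E' + E * cos θ) / (E * sin θ)) := by
  have hz : (E' : ℂ) + E * Complex.exp (θ * Complex.I) = ⟨E' + E * cos θ, E * sin θ⟩ := by
    apply Complex.ext <;> simp [Complex.exp_mul_I, ← Complex.ofReal_cos, ← Complex.ofReal_sin]
  rw [Theta, hz, Complex.arg_mk_of_im_pos (mul_pos hE hsin)]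

lemma theta_pos (hsin : 0 < sin θ) {E' E : ℝ} (hE : 0 < E) : 0 < Theta θ E' E := by
  rw [theta_eq_pi_div_two_sub_arctan hsin hE]
  exact sub_pos.2 (arctan_lt_pi_div_two _)

lemma theta_strictAnti (hsin : 0 < sin θ) {E : ℝ} (hE : 0 < E) :
    StrictAnti fun E' => Theta θ E' E := by
  intro a b hab
  simp only [theta_eq_pi_div_two_sub_arctan hsin hE]
  gcongr

lemma theta_mul_mul {c : ℝ} (hc : 0 < c) (a b : ℝ) : Theta θ (c * a) (c * b) = Theta θ a b := by
  rw [Theta, Theta, ← Complex.arg_real_mul ((a : ℂ) + _) hc]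
  push_cast
  ring_nf

lemma phi_self_lt_phi_self (hsin : 0 < sin θ) {X X' : ℕ → ℝ} {c : ℝ} (hc : 0 < c) {j : ℕ}
    (hj : X' j = c * X j) (hX'j : 0 < X' j) (hle : ∀ k, 1 ≤ k → X' k ≤ c * X k)
    {k₀ : ℕ} (hk₀ : 1 ≤ k₀) (hlt : X' k₀ < c * X k₀) (hfin : phi θ X X j ≠ ⊤) :
    phi θ X X j < phi θ X' X' j := by
  have hπ : ENNReal.ofReal (1 / π) ≠ 0 := (ENNReal.ofReal_pos.2 (by positivity)).ne'
  have hterm : ∀ k, Theta θ (X k) (X j) = Theta θ (c * X k) (X' j) := fun k => by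
    rw [hj, theta_mul_mul hc]
  obtain ⟨i, rfl⟩ := Nat.exists_eq_add_of_le' hk₀
  have hsum : ∑' k, ENNReal.ofReal (Theta θ (X (k + 1)) (X j)) ≠ ⊤ := fun h =>
    hfin (by rw [phi, h, ENNReal.mul_top hπ])
  refine ENNReal.mul_lt_mul_right hπ ENNReal.ofReal_ne_top
    (ENNReal.tsum_lt_tsum (i := i) hsum (fun k => ?_) ?_)
  · rw [hterm]
    exact ENNReal.ofReal_le_ofReal
      ((theta_strictAnti hsin hX'j).antitone (hle _ (Nat.le_add_left 1 k)))
  · rw [hterm, ENNReal.ofReal_lt_ofReal_iff (theta_pos hsin hX'j)]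
    exact theta_strictAnti hsin hX'j hlt

end Theta

lemma exists_isMaxOn_of_tendsto_zero {d : ℕ → ℝ} (hd : Tendsto d atTop (𝓝 0)) {s : Set ℕ}
    {j₀ : ℕ} (hj₀ : j₀ ∈ s) (hpos : 0 < d j₀) : ∃ j ∈ s, IsMaxOn d s j := by
  obtain ⟨N, hN⟩ := eventually_atTop.1 (hd.eventually (gt_mem_nhds hpos))
  have hj₀N : j₀ < N := lt_of_not_ge fun h => (hN j₀ h).false
  obtain ⟨j, hj, hmax⟩ := (s ∩ Set.Iio N).exists_max_image d
    ((Set.finite_Iio N).inter_of_right s) ⟨j₀, hj₀, hj₀N⟩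
  refine ⟨j, hj.1, fun k hk => ?_⟩
  rcases lt_or_ge k N with hkN | hkN
  · exact hmax k ⟨hk, hkN⟩
  · exact (hN k hkN).le.trans (hmax j₀ ⟨hj₀, hj₀N⟩)

theorem le_of_phi_self_eq {θ : ℝ} (hsin : 0 < sin θ) {P P' : ℕ → ℝ}
    (hP : ∀ k, 1 ≤ k → 0 < P k) (hP' : ∀ k, 1 ≤ k → 0 < P' k)
    (heq : ∀ j, 1 ≤ j → phi θ P P j = phi θ P' P' j) (hfin : ∀ j, 1 ≤ j → phi θ P P j ≠ ⊤)
    (hlim : Tendsto (fun k => log (P' k) - log (P k)) atTop (𝓝 0)) :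
    ∀ k, 1 ≤ k → P' k ≤ P k := by
  by_contra! ⟨j₀, hj₀, hlt⟩
  set d := fun k => log (P' k) - log (P k)
  have hexp : ∀ k, 1 ≤ k → P' k = exp (d k) * P k := fun k hk => by
    rw [exp_sub, exp_log (hP' k hk), exp_log (hP k hk), div_mul_cancel₀ _ (hP k hk).ne']
  have hdj₀ : 0 < d j₀ := sub_pos.2 (log_lt_log (hP j₀ hj₀) hlt)
  obtain ⟨j, hj, hmax⟩ := exists_isMaxOn_of_tendsto_zero hlim (s := Set.Ici 1) hj₀ hdj₀
  have hdj : 0 < d j := hdj₀.trans_le (hmax hj₀)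
  obtain ⟨N, hN⟩ := eventually_atTop.1 (hlim.eventually (gt_mem_nhds hdj))
  have hN1 : 1 ≤ N + 1 := le_add_self
  refine (phi_self_lt_phi_self hsin (exp_pos (d j)) (hexp j hj) (hP' j hj) (fun k hk => ?_) hN1 ?_
    (hfin j hj)).ne (heq j hj)
  · rw [hexp k hk]
    exact mul_le_mul_of_nonneg_right (exp_le_exp.2 (hmax hk)) (hP k hk).le
  · rw [hexp _ hN1]
    exact mul_lt_mul_of_pos_right (exp_lt_exp.2 (hN _ N.le_succ)) (hP _ hN1)

theorem stmt_2_general (θ : ℝ) (hθ : 0 < θ) (hθπ : θ < Real.pi)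
    (Q : ℕ → ℝ)
    (P P' : ℕ → ℝ) (hPpos : ∀ k, 1 ≤ k → 0 < P k) (hP'pos : ∀ k, 1 ≤ k → 0 < P' k)
    (hfix : ∀ j, 1 ≤ j → phi θ P P j = ENNReal.ofReal (Q j))
    (hfix' : ∀ j, 1 ≤ j → phi θ P' P' j = ENNReal.ofReal (Q j))
    (hlim : Tendsto (fun k : ℕ => Real.log (P' k) - Real.log (P k)) atTop (nhds 0)) :
    ∀ k, 1 ≤ k → P k = P' k := by
  have hsin : 0 < sin θ := sin_pos_of_pos_of_lt_pi hθ hθπ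
  have heq : ∀ j, 1 ≤ j → phi θ P P j = phi θ P' P' j := fun j hj =>
    (hfix j hj).trans (hfix' j hj).symm
  have hfin : ∀ j, 1 ≤ j → phi θ P P j ≠ ⊤ := fun j hj => hfix j hj ▸ ENNReal.ofReal_ne_top
  have hfin' : ∀ j, 1 ≤ j → phi θ P' P' j ≠ ⊤ := fun j hj => heq j hj ▸ hfin j hj
  have hlim' : Tendsto (fun k => log (P k) - log (P' k)) atTop (𝓝 0) := by
    simpa using hlim.neg
  intro k hk
  exact le_antisymm
    (le_of_phi_self_eq hsin hP'pos hPpos (fun j hj => (heq j hj).symm) hfin' hlim' k hk)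
    (le_of_phi_self_eq hsin hPpos hP'pos heq hfin hlim k hk)

theorem stmt_2 (θ : ℝ) (hθ : 0 < θ) (hθπ : θ < Real.pi)
    (Q : ℕ → ℝ) (hQpos : ∀ k, 1 ≤ k → 0 < Q k)
    (P P' : ℕ → ℝ) (hPpos : ∀ k, 1 ≤ k → 0 < P k) (hP'pos : ∀ k, 1 ≤ k → 0 < P' k)
    (hfix : ∀ j, 1 ≤ j → phi θ P P j = ENNReal.ofReal (Q j))
    (hfix' : ∀ j, 1 ≤ j → phi θ P' P' j = ENNReal.ofReal (Q j))
    (hlim : Tendsto (fun k : ℕ => Real.log (P' k) - Real.log (P k)) atTop (nhds 0)) :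
    ∀ k, 1 ≤ k → P k = P' k :=
  stmt_2_general θ hθ hθπ Q P P' hPpos hP'pos hfix hfix' hlim
end

section
/- Suppose X and Y are sequences of positive reals with φ_j(X,Y) = Q_j < ∞ for all j ≥ 1, and X' is a sequence of positive reals with c := sup_{k≥1} |ln X'_k − ln X_k| < ∞. Then there exists a sequence Y' of positive reals with φ_j(X',Y') = Q_j for all j ≥ 1, and moreover sup_{j≥1} |ln Y'_j − ln Y_j| ≤ c. -/
open Filter Asymptotics MeasureTheory
open scoped ENNReal Topology

/-!
`Θ` is invariant under a common rescaling of its two arguments, decreasing in the first and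
increasing in the second. Hence if `e^{-c} X_k ≤ X'_k ≤ e^c X_k`, then for each `j` the series
`t ↦ ∑_k Θ(X'_k, t)` is at most `π Q_j` at `t = e^{-c} Y_j` and at least `π Q_j` at
`t = e^c Y_j`, and the intermediate value theorem produces `Y'_j` in between. Convergence and
continuity of this series on `[e^{-c} Y_j, e^c Y_j]` come from the two-sided estimate
`Θ(E', E) ≍ E / (E' + E)` (concavity of `sin` on `[0, θ]` for the upper bound), which shows that
summability of `∑_k Θ(X_k, y)` is unaffected by rescaling `y`.
-/

lemma Complex.re_div_norm_eq_sin_arctan {z : ℂ} (hz : 0 < z.im) :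
    z.re / ‖z‖ = Real.sin (Real.arctan (z.re / z.im)) := by
  rw [Real.sin_arctan]
  have h0 : (1 : ℝ) + (z.re / z.im) ^ 2 = (z.re ^ 2 + z.im ^ 2) / z.im ^ 2 := by
    field_simp; ring
  have h1 : ‖z‖ = Real.sqrt (z.re ^ 2 + z.im ^ 2) := by
    rw [Complex.norm_def, Complex.normSq_apply]; ring_nf
  rw [h0, h1, Real.sqrt_div' _ (sq_nonneg z.im), Real.sqrt_sq hz.le]
  have hs : 0 < Real.sqrt (z.re ^ 2 + z.im ^ 2) := Real.sqrt_pos.2 (by positivity)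
  field_simp

lemma Complex.arg_le_arg_iff_of_im_pos {z w : ℂ} (hz : 0 < z.im) (hw : 0 < w.im) :
    Complex.arg z ≤ Complex.arg w ↔ w.re * z.im ≤ z.re * w.im := by
  have arctan_mem (x : ℝ) : Real.arctan x ∈ Set.Icc (-(Real.pi / 2)) (Real.pi / 2) :=
    ⟨(Real.neg_pi_div_two_lt_arctan x).le, (Real.arctan_lt_pi_div_two x).le⟩
  have arg_mem {u : ℂ} (hu : 0 < u.im) : Complex.arg u ∈ Set.Icc 0 Real.pi :=
    ⟨Complex.arg_nonneg_iff.2 hu.le, Complex.arg_le_pi u⟩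
  have ne_zero {u : ℂ} (hu : 0 < u.im) : u ≠ 0 := fun h => by simp [h] at hu
  rw [← Real.strictAntiOn_cos.le_iff_ge (arg_mem hw) (arg_mem hz),
    Complex.cos_arg (ne_zero hz), Complex.cos_arg (ne_zero hw),
    Complex.re_div_norm_eq_sin_arctan hz,
    Complex.re_div_norm_eq_sin_arctan hw,
    Real.strictMonoOn_sin.le_iff_le (arctan_mem _) (arctan_mem _),
    Real.arctan_strictMono.le_iff_le, div_le_div_iff₀ hw hz]

lemma Real.mul_sin_le_mul_sin {x θ : ℝ} (hx : 0 ≤ x) (hxθ : x ≤ θ) (hθ : θ ≤ Real.pi) :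
    x * Real.sin θ ≤ θ * Real.sin x := by
  rcases hx.eq_or_lt with rfl | hx
  · simp
  have := strictConcaveOn_sin_Icc.concaveOn.slope_anti (x := 0) ⟨le_rfl, Real.pi_pos.le⟩
    ⟨⟨hx.le, hxθ.trans hθ⟩, hx.ne'⟩ ⟨⟨hx.le.trans hxθ, hθ⟩, (hx.trans_le hxθ).ne'⟩ hxθ
  simp only [slope, vsub_eq_sub, sub_zero, Real.sin_zero, smul_eq_mul] at this
  rw [inv_mul_eq_div, inv_mul_eq_div, div_le_div_iff₀ (hx.trans_le hxθ) hx] at this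
  linarith

section Theta

variable {θ E E' : ℝ}

lemma ofReal_add_ofReal_mul_exp_re (θ E' E : ℝ) :
    ((E' : ℂ) + E * Complex.exp (θ * Complex.I)).re = E' + E * Real.cos θ := by
  simp [Complex.exp_ofReal_mul_I_re]

lemma ofReal_add_ofReal_mul_exp_im (θ E' E : ℝ) :
    ((E' : ℂ) + E * Complex.exp (θ * Complex.I)).im = E * Real.sin θ := by
  simp [Complex.exp_ofReal_mul_I_im]

lemma ofReal_add_ofReal_mul_exp_ne_zero (hs : 0 < Real.sin θ) (hE : 0 < E) :
    (E' : ℂ) + E * Complex.exp (θ * Complex.I) ≠ 0 := by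
  intro h
  have him := ofReal_add_ofReal_mul_exp_im θ E' E
  rw [h, Complex.zero_im] at him
  nlinarith [mul_pos hE hs]

lemma norm_ofReal_add_ofReal_mul_exp_sq (θ E' E : ℝ) :
    ‖(E' : ℂ) + E * Complex.exp (θ * Complex.I)‖ ^ 2
      = (E' + E * Real.cos θ) ^ 2 + (E * Real.sin θ) ^ 2 := by
  rw [Complex.sq_norm, Complex.normSq_apply, ofReal_add_ofReal_mul_exp_re,
    ofReal_add_ofReal_mul_exp_im]
  ring

lemma norm_ofReal_add_ofReal_mul_exp_le (hE' : 0 ≤ E') (hE : 0 ≤ E) :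
    ‖(E' : ℂ) + E * Complex.exp (θ * Complex.I)‖ ≤ E' + E := by
  refine (norm_add_le _ _).trans_eq ?_
  rw [norm_mul, Complex.norm_exp_ofReal_mul_I, Complex.norm_real, Complex.norm_real,
    Real.norm_of_nonneg hE', Real.norm_of_nonneg hE, mul_one]

lemma add_mul_sin_le_two_mul_norm_ofReal_add_ofReal_mul_exp (θ E' E : ℝ) :
    (E' + E) * Real.sin θ ≤ 2 * ‖(E' : ℂ) + E * Complex.exp (θ * Complex.I)‖ := by
  have hnorm := norm_ofReal_add_ofReal_mul_exp_sq θ E' E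
  have hE'_le : E' * Real.sin θ ≤ ‖(E' : ℂ) + E * Complex.exp (θ * Complex.I)‖ := by
    refine le_of_pow_le_pow_left₀ two_ne_zero (norm_nonneg _) ?_
    rw [hnorm]
    have hsq : (E' + E * Real.cos θ) ^ 2 + (E * Real.sin θ) ^ 2
        = (E' * Real.sin θ) ^ 2 + (E' * Real.cos θ + E) ^ 2 := by
      linear_combination (E ^ 2 - E' ^ 2) * Real.sin_sq_add_cos_sq θ
    rw [hsq]
    exact le_add_of_nonneg_right (sq_nonneg _)
  have hE_le : E * Real.sin θ ≤ ‖(E' : ℂ) + E * Complex.exp (θ * Complex.I)‖ := by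
    rw [← ofReal_add_ofReal_mul_exp_im θ E' E]
    exact Complex.im_le_norm _
  linarith

lemma sin_Theta (θ E' E : ℝ) :
    Real.sin (Theta θ E' E) = E * Real.sin θ / ‖(E' : ℂ) + E * Complex.exp (θ * Complex.I)‖ := by
  rw [Theta, Complex.sin_arg, ofReal_add_ofReal_mul_exp_im]

lemma Theta_nonneg (hs : 0 ≤ Real.sin θ) (hE : 0 ≤ E) : 0 ≤ Theta θ E' E := by
  rw [Theta, Complex.arg_nonneg_iff, ofReal_add_ofReal_mul_exp_im]
  positivity

lemma Theta_le_Theta_iff (hs : 0 < Real.sin θ) {E₁ E₂ E₁' E₂' : ℝ} (h₁ : 0 < E₁) (h₂ : 0 < E₂) :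
    Theta θ E₁' E₁ ≤ Theta θ E₂' E₂ ↔
      (E₂' + E₂ * Real.cos θ) * E₁ ≤ (E₁' + E₁ * Real.cos θ) * E₂ := by
  rw [Theta, Theta, Complex.arg_le_arg_iff_of_im_pos, ofReal_add_ofReal_mul_exp_re,
    ofReal_add_ofReal_mul_exp_im, ofReal_add_ofReal_mul_exp_re, ofReal_add_ofReal_mul_exp_im,
    ← mul_assoc, ← mul_assoc, mul_le_mul_iff_left₀ hs]
  all_goals rw [ofReal_add_ofReal_mul_exp_im]; positivity

lemma Theta_mono_right (hs : 0 < Real.sin θ) (hE' : 0 ≤ E') {E₁ E₂ : ℝ} (h₁ : 0 < E₁)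
    (h : E₁ ≤ E₂) : Theta θ E' E₁ ≤ Theta θ E' E₂ := by
  rw [Theta_le_Theta_iff hs h₁ (h₁.trans_le h)]
  nlinarith

lemma Theta_anti_left (hs : 0 < Real.sin θ) (hE : 0 < E) {E₁' E₂' : ℝ} (h : E₁' ≤ E₂') :
    Theta θ E₂' E ≤ Theta θ E₁' E := by
  rw [Theta_le_Theta_iff hs hE hE]
  nlinarith

lemma Theta_mul_mul {l : ℝ} (hl : 0 < l) (θ E' E : ℝ) :
    Theta θ (l * E') (l * E) = Theta θ E' E := by
  rw [Theta, Theta]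
  conv_rhs => rw [← Complex.arg_real_mul _ hl]
  push_cast
  ring_nf

lemma Theta_le (hθ : 0 < θ) (hθπ : θ < Real.pi) (hE' : 0 ≤ E') (hE : 0 < E) :
    Theta θ E' E ≤ θ := by
  have hs := Real.sin_pos_of_pos_of_lt_pi hθ hθπ
  refine (Theta_anti_left hs hE hE').trans_eq ?_
  rw [Theta, Complex.ofReal_zero, zero_add, Complex.arg_real_mul _ hE, Complex.exp_mul_I,
    Complex.arg_cos_add_sin_mul_I ⟨by linarith [Real.pi_pos], hθπ.le⟩]

lemma mul_div_add_le_Theta (hs : 0 < Real.sin θ) (hE' : 0 ≤ E') (hE : 0 < E) :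
    Real.sin θ * (E / (E' + E)) ≤ Theta θ E' E := by
  calc Real.sin θ * (E / (E' + E))
      = E * Real.sin θ / (E' + E) := by ring
    _ ≤ E * Real.sin θ / ‖(E' : ℂ) + E * Complex.exp (θ * Complex.I)‖ := by
      refine div_le_div_of_nonneg_left (by positivity) ?_
        (norm_ofReal_add_ofReal_mul_exp_le hE' hE.le)
      exact norm_pos_iff.2 (ofReal_add_ofReal_mul_exp_ne_zero hs hE)
    _ ≤ Theta θ E' E := sin_Theta θ E' E ▸ Real.sin_le (Theta_nonneg hs.le hE.le)

lemma Theta_le_mul_div_add (hθ : 0 < θ) (hθπ : θ < Real.pi) (hE' : 0 ≤ E') (hE : 0 < E) :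
    Theta θ E' E ≤ 2 * θ / Real.sin θ * (E / (E' + E)) := by
  have hs := Real.sin_pos_of_pos_of_lt_pi hθ hθπ
  set z : ℂ := (E' : ℂ) + E * Complex.exp (θ * Complex.I)
  have hz : 0 < ‖z‖ := norm_pos_iff.2 (ofReal_add_ofReal_mul_exp_ne_zero hs hE)
  have hconc : Theta θ E' E * Real.sin θ ≤ θ * (E * Real.sin θ / ‖z‖) :=
    sin_Theta θ E' E ▸ Real.mul_sin_le_mul_sin (Theta_nonneg hs.le hE.le)
      (Theta_le hθ hθπ hE' hE) hθπ.le
  have hnorm := add_mul_sin_le_two_mul_norm_ofReal_add_ofReal_mul_exp θ E' E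
  calc Theta θ E' E ≤ θ * E / ‖z‖ := by
        rw [le_div_iff₀ hz, ← mul_le_mul_iff_left₀ hs]
        rw [mul_div_assoc', le_div_iff₀ hz] at hconc
        linarith
    _ ≤ θ * E / ((E' + E) * Real.sin θ / 2) :=
        div_le_div_of_nonneg_left (by positivity) (by positivity) (by linarith)
    _ = 2 * θ / Real.sin θ * (E / (E' + E)) := by
        field_simp

lemma summable_Theta_mul_right {ι : Type*} (hθ : 0 < θ) (hθπ : θ < Real.pi) {x : ι → ℝ}
    (hx : ∀ i, 0 ≤ x i) {y l : ℝ} (hy : 0 < y) (hl : 1 ≤ l)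
    (h : Summable fun i => Theta θ (x i) y) : Summable fun i => Theta θ (x i) (l * y) := by
  have hs := Real.sin_pos_of_pos_of_lt_pi hθ hθπ
  refine (h.mul_left (2 * θ / Real.sin θ * l / Real.sin θ)).of_nonneg_of_le
    (fun i => Theta_nonneg hs.le (by positivity)) fun i => ?_
  have hxi := hx i
  calc Theta θ (x i) (l * y) ≤ 2 * θ / Real.sin θ * (l * y / (x i + l * y)) :=
        Theta_le_mul_div_add hθ hθπ hxi (by positivity)
    _ ≤ 2 * θ / Real.sin θ * (l * (y / (x i + y))) := by
        gcongr
        rw [mul_div_assoc]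
        gcongr
        nlinarith
    _ = 2 * θ / Real.sin θ * l / Real.sin θ * (Real.sin θ * (y / (x i + y))) := by
        field_simp
    _ ≤ 2 * θ / Real.sin θ * l / Real.sin θ * Theta θ (x i) y := by
        gcongr
        exact mul_div_add_le_Theta hs hxi hy

lemma continuousOn_Theta (hs : 0 < Real.sin θ) (E' : ℝ) :
    ContinuousOn (Theta θ E') (Set.Ioi 0) := by
  intro E hE
  refine (Complex.continuousAt_arg ?_).comp
    (f := fun E : ℝ => (E' : ℂ) + E * Complex.exp (θ * Complex.I)) (by fun_prop)
    |>.continuousWithinAt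
  rw [Complex.mem_slitPlane_iff, ofReal_add_ofReal_mul_exp_im]
  exact Or.inr (mul_pos hE hs).ne'

end Theta

lemma Real.abs_log_sub_log_le_iff {a b c : ℝ} (ha : 0 < a) (hb : 0 < b) :
    |Real.log a - Real.log b| ≤ c ↔ a ∈ Set.Icc (Real.exp (-c) * b) (Real.exp c * b) := by
  rw [Set.mem_Icc, ← Real.exp_log hb, ← Real.exp_add, ← Real.exp_add, Real.exp_log hb,
    ← Real.le_log_iff_exp_le ha, ← Real.log_le_iff_le_exp ha, abs_sub_le_iff]
  constructor <;> rintro ⟨h₁, h₂⟩ <;> constructor <;> linarith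

lemma exists_mem_Icc_hasSum_of_tsum_le_of_le_tsum {ι : Type*} {f : ι → ℝ → ℝ} {g : ι → ℝ}
    {a b s : ℝ} (hab : a ≤ b) (hf : ∀ i, ContinuousOn (f i) (Set.Icc a b)) (hg : Summable g)
    (hfg : ∀ i t, t ∈ Set.Icc a b → ‖f i t‖ ≤ g i)
    (ha : ∑' i, f i a ≤ s) (hb : s ≤ ∑' i, f i b) :
    ∃ t ∈ Set.Icc a b, HasSum (fun i => f i t) s := by
  obtain ⟨t, ht, hts⟩ := intermediate_value_Icc hab (continuousOn_tsum hf hg hfg) ⟨ha, hb⟩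
  exact ⟨t, ht, hts ▸ (hg.of_norm_bounded fun i => hfg i t ht).hasSum⟩

theorem exists_hasSum_Theta_of_abs_log_sub_log_le {ι : Type*} [Nonempty ι] {θ : ℝ}
    (hθ : 0 < θ) (hθπ : θ < Real.pi) {x x' : ι → ℝ} (hx : ∀ i, 0 < x i) (hx' : ∀ i, 0 < x' i)
    {c : ℝ} (hc : ∀ i, |Real.log (x' i) - Real.log (x i)| ≤ c) {y s : ℝ} (hy : 0 < y)
    (hs : HasSum (fun i => Theta θ (x i) y) s) :
    ∃ y', 0 < y' ∧ HasSum (fun i => Theta θ (x' i) y') s ∧ |Real.log y' - Real.log y| ≤ c := by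
  have hsin := Real.sin_pos_of_pos_of_lt_pi hθ hθπ
  have hc0 : 0 ≤ c := (abs_nonneg _).trans (hc (Classical.arbitrary ι))
  have hxx' i := (Real.abs_log_sub_log_le_iff (hx' i) (hx i)).1 (hc i)
  set a := Real.exp (-c) * y
  set b := Real.exp c * y
  have ha : 0 < a := by positivity
  have hb : 0 < b := by positivity
  have hab : a ≤ b := mul_le_mul_of_nonneg_right (Real.exp_le_exp.2 (by linarith)) hy.le
  have h_at_a i : Theta θ (x' i) a ≤ Theta θ (x i) y :=
    (Theta_anti_left hsin ha (hxx' i).1).trans_eq (Theta_mul_mul (Real.exp_pos (-c)) θ (x i) y)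
  have h_at_b i : Theta θ (x i) y ≤ Theta θ (x' i) b :=
    (Theta_mul_mul (Real.exp_pos c) θ (x i) y).symm.trans_le (Theta_anti_left hsin hb (hxx' i).2)
  have h_dom i t (ht : t ∈ Set.Icc a b) :
      Theta θ (x' i) t ≤ Theta θ (x i) (Real.exp (2 * c) * y) :=
    calc Theta θ (x' i) t ≤ Theta θ (x' i) b :=
          Theta_mono_right hsin (hx' i).le (ha.trans_le ht.1) ht.2
      _ ≤ Theta θ (Real.exp (-c) * x i) (Real.exp (-c) * (Real.exp (2 * c) * y)) := by
          rw [← mul_assoc, ← Real.exp_add, show -c + 2 * c = c by ring]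
          exact Theta_anti_left hsin hb (hxx' i).1
      _ = Theta θ (x i) (Real.exp (2 * c) * y) := Theta_mul_mul (Real.exp_pos _) _ _ _
  have h_dom_summable := summable_Theta_mul_right hθ hθπ (fun i => (hx i).le) hy
    (l := Real.exp (2 * c)) (Real.one_le_exp (by positivity)) hs.summable
  have h_nonneg i t (ht : t ∈ Set.Icc a b) : 0 ≤ Theta θ (x' i) t :=
    Theta_nonneg hsin.le (ha.le.trans ht.1)
  have h_summable t (ht : t ∈ Set.Icc a b) : Summable fun i => Theta θ (x' i) t :=
    h_dom_summable.of_nonneg_of_le (h_nonneg · t ht) (h_dom · t ht)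
  obtain ⟨t, ht, hts⟩ := exists_mem_Icc_hasSum_of_tsum_le_of_le_tsum hab
    (fun i => (continuousOn_Theta hsin (x' i)).mono fun t ht => ha.trans_le ht.1)
    h_dom_summable
    (fun i t ht => (Real.norm_of_nonneg (h_nonneg i t ht)).trans_le (h_dom i t ht))
    (hs.tsum_eq ▸ (h_summable a ⟨le_rfl, hab⟩).tsum_le_tsum h_at_a hs.summable)
    (hs.tsum_eq ▸ hs.summable.tsum_le_tsum h_at_b (h_summable b ⟨hab, le_rfl⟩))
  exact ⟨t, ha.trans_le ht.1, hts, (Real.abs_log_sub_log_le_iff (ha.trans_le ht.1) hy).2 ht⟩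

lemma summable_of_tsum_ofReal_ne_top {ι : Type*} {f : ι → ℝ} (hf : ∀ i, 0 ≤ f i)
    (h : ∑' i, ENNReal.ofReal (f i) ≠ ∞) : Summable f := by
  simpa [ENNReal.toReal_ofReal (hf _)] using ENNReal.summable_toReal h

section phi

variable {θ s : ℝ} {X Y : ℕ → ℝ} {j : ℕ}

lemma summable_Theta_of_phi_ne_top (hnn : ∀ k, 0 ≤ Theta θ (X (k + 1)) (Y j))
    (h : phi θ X Y j ≠ ∞) : Summable fun k => Theta θ (X (k + 1)) (Y j) :=
  summable_of_tsum_ofReal_ne_top hnn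
    (ENNReal.lt_top_of_mul_ne_top_right h (by simp [Real.pi_pos])).ne

lemma phi_eq_of_hasSum (hnn : ∀ k, 0 ≤ Theta θ (X (k + 1)) (Y j))
    (h : HasSum (fun k => Theta θ (X (k + 1)) (Y j)) s) :
    phi θ X Y j = ENNReal.ofReal (1 / Real.pi) * ENNReal.ofReal s := by
  rw [phi, ← ENNReal.ofReal_tsum_of_nonneg hnn h.summable, h.tsum_eq]

end phi

theorem stmt_6_general (θ : ℝ) (hθ : 0 < θ) (hθπ : θ < Real.pi)
    (Q : ℕ → ℝ)
    (X Y X' : ℕ → ℝ) (hXpos : ∀ k, 1 ≤ k → 0 < X k) (hYpos : ∀ j, 1 ≤ j → 0 < Y j)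
    (hX'pos : ∀ k, 1 ≤ k → 0 < X' k)
    (hfix : ∀ j, 1 ≤ j → phi θ X Y j = ENNReal.ofReal (Q j))
    (c : ℝ) (hc : ∀ k, 1 ≤ k → |Real.log (X' k) - Real.log (X k)| ≤ c) :
    ∃ Y' : ℕ → ℝ, (∀ j, 1 ≤ j → 0 < Y' j) ∧
      (∀ j, 1 ≤ j → phi θ X' Y' j = ENNReal.ofReal (Q j)) ∧
      ∀ j, 1 ≤ j → |Real.log (Y' j) - Real.log (Y j)| ≤ c := by
  have hsin := Real.sin_pos_of_pos_of_lt_pi hθ hθπ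
  have key : ∀ j, 1 ≤ j → ∃ y', 0 < y' ∧
      phi θ X' (fun _ => y') j = ENNReal.ofReal (Q j) ∧ |Real.log y' - Real.log (Y j)| ≤ c := by
    intro j hj
    have hnn k : 0 ≤ Theta θ (X (k + 1)) (Y j) := Theta_nonneg hsin.le (hYpos j hj).le
    have hsum := summable_Theta_of_phi_ne_top hnn (hfix j hj ▸ ENNReal.ofReal_ne_top)
    obtain ⟨y', hy', hsum', hlog⟩ := exists_hasSum_Theta_of_abs_log_sub_log_le hθ hθπ
      (fun k => hXpos (k + 1) (Nat.le_add_left 1 k))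
      (fun k => hX'pos (k + 1) (Nat.le_add_left 1 k))
      (fun k => hc (k + 1) (Nat.le_add_left 1 k)) (hYpos j hj) hsum.hasSum
    refine ⟨y', hy', ?_, hlog⟩
    rw [← hfix j hj, phi_eq_of_hasSum hnn hsum.hasSum,
      phi_eq_of_hasSum (Y := fun _ => y') (fun _ => Theta_nonneg hsin.le hy'.le) hsum']
  choose! Y' hY' using key
  exact ⟨Y', fun j hj => (hY' j hj).1, fun j hj => (hY' j hj).2.1, fun j hj => (hY' j hj).2.2⟩

theorem stmt_6 (θ : ℝ) (hθ : 0 < θ) (hθπ : θ < Real.pi)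
    (Q : ℕ → ℝ) (hQpos : ∀ k, 1 ≤ k → 0 < Q k)
    (X Y X' : ℕ → ℝ) (hXpos : ∀ k, 1 ≤ k → 0 < X k) (hYpos : ∀ j, 1 ≤ j → 0 < Y j)
    (hX'pos : ∀ k, 1 ≤ k → 0 < X' k)
    (hfix : ∀ j, 1 ≤ j → phi θ X Y j = ENNReal.ofReal (Q j))
    (c : ℝ) (hc : ∀ k, 1 ≤ k → |Real.log (X' k) - Real.log (X k)| ≤ c) :
    ∃ Y' : ℕ → ℝ, (∀ j, 1 ≤ j → 0 < Y' j) ∧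
      (∀ j, 1 ≤ j → phi θ X' Y' j = ENNReal.ofReal (Q j)) ∧
      ∀ j, 1 ≤ j → |Real.log (Y' j) - Real.log (Y j)| ≤ c :=
  stmt_6_general θ hθ hθπ Q X Y X' hXpos hYpos hX'pos hfix c hc
end

section
/- Assume Q_k = k + O(1), let α > 1, and let X, Y be sequences of positive reals with ln X_k = α·ln k + O(1) and φ_j(X,Y) = Q_j for all j. Then limsup_{j→∞} (ln Y_j − α·ln j) ≤ limsup_{k→∞} (ln X_k − α·ln k) − α·ln D_α and liminf_{j→∞} (ln Y_j − α·ln j) ≥ liminf_{k→∞} (ln X_k − α·ln k) − α·ln D_α. -/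
open Filter Asymptotics MeasureTheory
open scoped ENNReal Topology

/-!
Homogeneity of the argument gives `Θ(E', E) = g(E'/E)` with `g u = Θ(u, 1)`, and for
`sin θ > 0` one has `g u = π/2 - arctan ((u + cos θ)/sin θ)`: a positive, antitone function,
bounded by `π` and decaying like `sin θ / u`. If `X_k ≤ C k^α` for `k ≥ M`, the integral test
compares `π Q_j = ∑_k g(X_k/Y_j)` with `∫_0^∞ g(C s^α/Y_j) ds = π D_α (Y_j/C)^{1/α}`, with an
error of at most `(M + 1) π`; a lower bound `c k^α ≤ X_k` is handled in the same way. Taking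
logarithms and using `Q_j / j → 1`, every eventual strict upper (lower) bound `c` of
`ln X_k - α ln k` turns into the eventual bound `c - α ln D_α ± ε` of `ln Y_j - α ln j`, which
yields both inequalities, the boundedness needed for the real `limsup`/`liminf` included.
-/

open Real Set

theorem Complex.arg_eq_pi_div_two_sub_arctan {z : ℂ} (hz : 0 < z.im) :
    z.arg = π / 2 - Real.arctan (z.re / z.im) := by
  rw [Complex.arg_of_im_pos hz, arccos_eq_pi_div_two_sub_arcsin, arctan_eq_arcsin,
    Complex.norm_eq_sqrt_sq_add_sq]
  congr 2
  have : √(1 + (z.re / z.im) ^ 2) = √(z.re ^ 2 + z.im ^ 2) / z.im := by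
    rw [eq_div_iff hz.ne', ← sqrt_sq hz.le, ← sqrt_mul (by positivity), sqrt_sq hz.le]
    congr 1
    field_simp
    ring
  rw [this]
  field_simp

theorem Theta_eq_Theta_div_one (θ E' : ℝ) {E : ℝ} (hE : 0 < E) :
    Theta θ E' E = Theta θ (E' / E) 1 := by
  have : (E' : ℂ) + E * Complex.exp (θ * Complex.I) =
      (E : ℝ) * (((E' / E : ℝ) : ℂ) + ((1 : ℝ) : ℂ) * Complex.exp (θ * Complex.I)) := by
    have hE' : (E : ℂ) ≠ 0 := mod_cast hE.ne'
    push_cast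
    field_simp
  rw [Theta, this, Complex.arg_real_mul _ hE, Theta]

theorem Theta_le_pi (θ E' E : ℝ) : Theta θ E' E ≤ π := Complex.arg_le_pi _

section
variable {θ : ℝ} (hs : 0 < sin θ)
include hs

theorem Theta_one_eq (u : ℝ) : Theta θ u 1 = π / 2 - arctan ((u + cos θ) / sin θ) := by
  rw [Theta, Complex.arg_eq_pi_div_two_sub_arctan] <;>
    simp [Complex.exp_ofReal_mul_I_re, Complex.exp_ofReal_mul_I_im, hs]

theorem Theta_one_pos (u : ℝ) : 0 < Theta θ u 1 := by
  rw [Theta_one_eq hs]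
  linarith [arctan_lt_pi_div_two ((u + cos θ) / sin θ)]

theorem Theta_pos (E' : ℝ) {E : ℝ} (hE : 0 < E) : 0 < Theta θ E' E := by
  rw [Theta_eq_Theta_div_one _ _ hE]
  exact Theta_one_pos hs _

theorem antitone_Theta_one : Antitone (fun u => Theta θ u 1) := by
  intro u v huv
  simp only [Theta_one_eq hs]
  gcongr

theorem continuous_Theta_one : Continuous (fun u => Theta θ u 1) := by
  simp only [Theta_one_eq hs]
  fun_prop

theorem Theta_one_le_div {u : ℝ} (hu : 0 < u + cos θ) :
    Theta θ u 1 ≤ sin θ / (u + cos θ) := by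
  rw [Theta_one_eq hs, ← arctan_inv_of_pos (by positivity), inv_div]
  calc arctan (sin θ / (u + cos θ)) ≤ tan (arctan (sin θ / (u + cos θ))) :=
        le_tan (arctan_nonneg.2 (by positivity)) (arctan_lt_pi_div_two _)
    _ = sin θ / (u + cos θ) := tan_arctan _

end

theorem hasSum_of_phi_eq_ofReal {θ : ℝ} {X Y : ℕ → ℝ} {j : ℕ} {q : ℝ} (hq : 0 ≤ q)
    (hnn : ∀ k, 0 ≤ Theta θ (X (k + 1)) (Y j)) (h : phi θ X Y j = ENNReal.ofReal q) :
    HasSum (fun k => Theta θ (X (k + 1)) (Y j)) (π * q) := by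
  have hS : ∑' k, ENNReal.ofReal (Theta θ (X (k + 1)) (Y j)) = ENNReal.ofReal (π * q) := by
    rw [phi] at h
    rw [ENNReal.ofReal_mul pi_pos.le, ← h, ← mul_assoc, ← ENNReal.ofReal_mul pi_pos.le,
      mul_one_div_cancel pi_ne_zero, ENNReal.ofReal_one, one_mul]
  have hENN : HasSum (fun k => ENNReal.ofReal (Theta θ (X (k + 1)) (Y j)))
      (ENNReal.ofReal (π * q)) := hS ▸ ENNReal.summable.hasSum
  have hNN := NNReal.hasSum_coe.2 (ENNReal.hasSum_coe.1 hENN)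
  rw [Real.coe_toNNReal _ (mul_nonneg pi_pos.le hq)] at hNN
  simpa only [Real.coe_toNNReal _ (hnn _)] using hNN

theorem integral_Ioi_comp_mul_rpow {E : Type*} [NormedAddCommGroup E] [NormedSpace ℝ E]
    (g : ℝ → E) {c α : ℝ} (hc : 0 < c) (hα : α ≠ 0) :
    ∫ s in Ioi 0, g (c * s ^ α) = c ^ (-α⁻¹) • ∫ s in Ioi 0, g (s ^ α) := by
  have hb : 0 < c ^ α⁻¹ := rpow_pos_of_pos hc _
  have hscale : ∀ s ∈ Ioi (0 : ℝ), g (c * s ^ α) = g ((c ^ α⁻¹ * s) ^ α) := by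
    intro s hs
    rw [mul_rpow hb.le (le_of_lt hs), ← rpow_mul hc.le, inv_mul_cancel₀ hα, rpow_one]
  rw [setIntegral_congr_fun measurableSet_Ioi hscale,
    integral_comp_mul_left_Ioi (fun u => g (u ^ α)) 0 hb, mul_zero, ← rpow_neg_one,
    ← rpow_mul hc.le, mul_neg_one]

section
variable {θ α : ℝ} (hs : 0 < sin θ)
include hs

theorem antitoneOn_Theta_mul_rpow {c : ℝ} (hc : 0 ≤ c) (hα : 0 ≤ α) :
    AntitoneOn (fun s => Theta θ (c * s ^ α) 1) (Ici 0) := fun _ hu _ _ huv =>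
  antitone_Theta_one hs (mul_le_mul_of_nonneg_left (rpow_le_rpow hu huv hα) hc)

theorem integrableOn_Theta_mul_rpow (hα : 1 < α) {c : ℝ} (hc : 0 < c) :
    IntegrableOn (fun s => Theta θ (c * s ^ α) 1) (Ioi 0) := by
  have hcont : Continuous (fun s : ℝ => Theta θ (c * s ^ α) 1) :=
    (continuous_Theta_one hs).comp (continuous_const.mul (continuous_rpow_const (by linarith)))
  have hlarge : ∀ᶠ s : ℝ in atTop, 2 ≤ c * s ^ α :=
    ((tendsto_rpow_atTop (by linarith)).const_mul_atTop hc).eventually_ge_atTop 2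
  -- once `c s^α + cos θ ≥ c s^α / 2`, the decay bound gives `Θ ≤ (2 sin θ / c) s^(-α)`
  have hdecay : (fun s => Theta θ (c * s ^ α) 1) =O[atTop] fun s : ℝ => s ^ (-α) := by
    refine IsBigO.of_bound (2 * sin θ / c) ?_
    filter_upwards [hlarge, eventually_gt_atTop 0] with s hs2 hs0
    have hcos := neg_one_le_cos θ
    rw [norm_of_nonneg (Theta_one_pos hs _).le, norm_of_nonneg (rpow_nonneg hs0.le _),
      rpow_neg hs0.le]
    calc Theta θ (c * s ^ α) 1 ≤ sin θ / (c * s ^ α + cos θ) :=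
          Theta_one_le_div hs (by linarith)
      _ ≤ sin θ / (c * s ^ α / 2) := by gcongr; linarith
      _ = 2 * sin θ / c * (s ^ α)⁻¹ := by field_simp
  exact ((hcont.locallyIntegrable.locallyIntegrableOn (Ici 0)).integrableOn_of_isBigO_atTop
    hdecay (integrableAtFilter_rpow_atTop_iff.2 (by linarith))).mono_set Ioi_subset_Ici_self

theorem Drift_pos (hα : 1 < α) : 0 < Drift θ α := by
  have hint := integrableOn_Theta_mul_rpow hs hα one_pos
  simp only [one_mul] at hint
  have hsupp : Function.support (fun s => Theta θ (s ^ α) 1) = univ :=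
    eq_univ_of_forall fun s => (Theta_one_pos hs _).ne'
  have hpos : 0 < ∫ s in Ioi (0 : ℝ), Theta θ (s ^ α) 1 := by
    rw [setIntegral_pos_iff_support_of_nonneg_ae
      (Eventually.of_forall fun s => (Theta_one_pos hs _).le) hint, hsupp, univ_inter,
      volume_Ioi]
    simp
  exact mul_pos (by positivity) hpos

end

theorem integral_Theta_div_mul_rpow (θ : ℝ) {α C y : ℝ} (hα : α ≠ 0) (hC : 0 < C)
    (hy : 0 < y) :
    ∫ s in Ioi 0, Theta θ (C / y * s ^ α) 1 = π * Drift θ α * (y / C) ^ α⁻¹ := by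
  rw [integral_Ioi_comp_mul_rpow (fun u => Theta θ u 1) (div_pos hC hy) hα, Drift, smul_eq_mul,
    rpow_neg (div_pos hC hy).le, ← inv_rpow (div_pos hC hy).le, inv_div]
  field_simp

theorem setIntegral_Ioi_le_mul_add {f : ℝ → ℝ} {a b B : ℝ} (hab : a ≤ b)
    (hf : IntegrableOn f (Ioi a)) (hf0 : ∀ x, 0 ≤ f x) (hfB : ∀ x, f x ≤ B) :
    ∫ x in Ioi a, f x ≤ (b - a) * B + ∫ x in Ioi b, f x := by
  rw [← intervalIntegral.integral_interval_add_Ioi hf (hf.mono_set (Ioi_subset_Ioi hab))]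
  gcongr
  calc ∫ x in a..b, f x ≤ ‖∫ x in a..b, f x‖ := le_norm_self _
    _ ≤ B * |b - a| := intervalIntegral.norm_integral_le_of_norm_le_const fun x _ => by
        rw [norm_of_nonneg (hf0 x)]; exact hfB x
    _ = (b - a) * B := by rw [abs_of_nonneg (sub_nonneg.2 hab), mul_comm]

section
variable {θ α : ℝ} (hs : 0 < sin θ) (hα : 1 < α) {X : ℕ → ℝ} {y q : ℝ} (hy : 0 < y)
  (hsum : HasSum (fun k : ℕ => Theta θ (X (k + 1)) y) (π * q))
include hs hα hy hsum

theorem Drift_mul_rpow_inv_le {C : ℝ} (hC : 0 < C) {M : ℕ} (hX : ∀ k ≥ M, X k ≤ C * k ^ α) :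
    Drift θ α * (y / C) ^ α⁻¹ ≤ q + M + 1 := by
  set f := fun s : ℝ => Theta θ (C / y * s ^ α) 1
  have hf0 : ∀ s, 0 ≤ f s := fun s => (Theta_one_pos hs _).le
  have hanti : AntitoneOn f (Ici 0) :=
    antitoneOn_Theta_mul_rpow hs (by positivity) (by linarith)
  have hint : IntegrableOn f (Ioi 0) := integrableOn_Theta_mul_rpow hs hα (by positivity)
  have hle : ∀ n : ℕ, f (n + (M + 1) : ℕ) ≤ Theta θ (X (n + M + 1)) y := fun n => by
    rw [Theta_eq_Theta_div_one _ _ hy]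
    refine antitone_Theta_one hs ?_
    rw [div_mul_eq_mul_div]
    exact div_le_div_of_nonneg_right (hX _ (by omega)) hy.le
  have htail_le : ∑' n, Theta θ (X (n + M + 1)) y ≤ π * q := by
    rw [← hsum.tsum_eq, ← hsum.summable.sum_add_tsum_nat_add M]
    exact le_add_of_nonneg_left (Finset.sum_nonneg fun k _ => (Theta_pos hs _ hy).le)
  have hsumf := hanti.summable_of_integrableOn_Ioi_zero hint fun s _ => hf0 s
  have hIoi : ∫ s in Ioi ((M + 1 : ℕ) : ℝ), f s ≤ ∑' n, f (n + (M + 1) : ℕ) :=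
    (hanti.mono (Ici_subset_Ici.2 (Nat.cast_nonneg _))).integral_le_tsum_comp_add _ hsumf
      fun s _ => hf0 s
  have hcmp : ∑' n, f (n + (M + 1) : ℕ) ≤ ∑' n, Theta θ (X (n + M + 1)) y :=
    Summable.tsum_le_tsum hle ((summable_nat_add_iff (f := fun n : ℕ => f n) (M + 1)).2 hsumf)
      ((summable_nat_add_iff M).2 hsum.summable)
  have hhead_le := setIntegral_Ioi_le_mul_add (b := ((M + 1 : ℕ) : ℝ)) (Nat.cast_nonneg _) hint hf0
    fun s => Theta_le_pi _ _ _
  rw [integral_Theta_div_mul_rpow θ (by linarith) hC hy] at hhead_le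
  have : π * (Drift θ α * (y / C) ^ α⁻¹) ≤ π * (q + M + 1) := by
    rw [Nat.cast_add_one] at hhead_le hIoi
    linarith
  exact le_of_mul_le_mul_left this pi_pos

theorem le_add_Drift_mul_rpow_inv {c : ℝ} (hc : 0 < c) {M : ℕ} (hX : ∀ k ≥ M, c * k ^ α ≤ X k) :
    q ≤ M + Drift θ α * (y / c) ^ α⁻¹ := by
  set f := fun s : ℝ => Theta θ (c / y * s ^ α) 1
  have hf0 : ∀ s, 0 ≤ f s := fun s => (Theta_one_pos hs _).le
  have hanti : AntitoneOn f (Ici 0) :=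
    antitoneOn_Theta_mul_rpow hs (by positivity) (by linarith)
  have hint : IntegrableOn f (Ioi 0) := integrableOn_Theta_mul_rpow hs hα (by positivity)
  have hle : ∀ n : ℕ, Theta θ (X (n + M + 1)) y ≤ f (n + M + 1 : ℕ) := fun n => by
    rw [Theta_eq_Theta_div_one _ _ hy]
    refine antitone_Theta_one hs ?_
    rw [div_mul_eq_mul_div]
    exact div_le_div_of_nonneg_right (hX _ (by omega)) hy.le
  have hsplit : π * q ≤ M * π + ∑' n, Theta θ (X (n + M + 1)) y := by
    rw [← hsum.tsum_eq, ← hsum.summable.sum_add_tsum_nat_add M]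
    gcongr
    calc ∑ k ∈ Finset.range M, Theta θ (X (k + 1)) y ≤ ∑ _k ∈ Finset.range M, π :=
          Finset.sum_le_sum fun k _ => Theta_le_pi _ _ _
      _ = M * π := by simp
  have hcmp : ∑' n, Theta θ (X (n + M + 1)) y ≤ ∑' n, f (n + M + 1 : ℕ) := by
    have h1 : Summable fun n : ℕ => Theta θ (X (n + M + 1)) y :=
      (summable_nat_add_iff (f := fun k : ℕ => Theta θ (X (k + 1)) y) M).2 hsum.summable
    have h2 : Summable fun n : ℕ => f (n + M + 1 : ℕ) :=
      (summable_nat_add_iff (f := fun n : ℕ => f n) (M + 1)).2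
        (hanti.summable_of_integrableOn_Ioi_zero hint fun s _ => hf0 s)
    exact Summable.tsum_le_tsum hle h1 h2
  have htail_le : ∑' n, f (n + M + 1 : ℕ) ≤ ∫ s in Ioi (0 : ℝ), f s :=
    ((hanti.mono (Ici_subset_Ici.2 (Nat.cast_nonneg M))).tsum_comp_add_le_integral M
      (hint.mono_set (Ioi_subset_Ioi (Nat.cast_nonneg M))) fun s _ => hf0 s).trans
      (setIntegral_mono_set hint (Eventually.of_forall hf0)
        (Ioi_subset_Ioi (Nat.cast_nonneg M)).eventuallyLE)
  rw [integral_Theta_div_mul_rpow θ (by linarith) hc hy] at htail_le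
  have : π * q ≤ π * (M + Drift θ α * (y / c) ^ α⁻¹) := by linarith
  exact le_of_mul_le_mul_left this pi_pos

end

theorem tendsto_add_div_natCast {Q : ℕ → ℝ}
    (hQ : (fun k : ℕ => Q k - k) =O[atTop] fun _ => (1 : ℝ)) (b : ℝ) :
    Tendsto (fun j : ℕ => (Q j + b) / j) atTop (𝓝 1) := by
  have hO : (fun j : ℕ => (Q j - j + b) / j) =O[atTop] fun j : ℕ => (j : ℝ)⁻¹ := by
    simpa [div_eq_mul_inv] using
      (hQ.add (isBigO_const_one ℝ b atTop)).mul (isBigO_refl (fun j : ℕ => (j : ℝ)⁻¹) atTop)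
  have h := (hO.trans_tendsto tendsto_inv_atTop_nhds_zero_nat).const_add 1
  rw [add_zero] at h
  refine h.congr' ?_
  filter_upwards [eventually_ge_atTop 1] with j hj
  have : (j : ℝ) ≠ 0 := by positivity
  field_simp
  ring

theorem tendsto_log_add_sub_log {Q : ℕ → ℝ}
    (hQ : (fun k : ℕ => Q k - k) =O[atTop] fun _ => (1 : ℝ)) (b : ℝ) :
    Tendsto (fun j : ℕ => log (Q j + b) - log j) atTop (𝓝 0) := by
  have h := tendsto_add_div_natCast hQ b
  have hlog := h.log one_ne_zero
  rw [log_one] at hlog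
  refine hlog.congr' ?_
  filter_upwards [h.eventually_ne one_ne_zero] with j hj
  rw [log_div (div_ne_zero_iff.1 hj).1 (div_ne_zero_iff.1 hj).2]

theorem le_exp_mul_rpow_of_log_sub_le {x k α c : ℝ} (hx : 0 < x) (hk : 0 < k)
    (h : log x - α * log k ≤ c) : x ≤ exp c * k ^ α := by
  rw [rpow_def_of_pos hk, ← exp_add, ← log_le_iff_le_exp hx]
  linarith

theorem exp_mul_rpow_le_of_le_log_sub {x k α c : ℝ} (hx : 0 < x) (hk : 0 < k)
    (h : c ≤ log x - α * log k) : exp c * k ^ α ≤ x := by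
  rw [rpow_def_of_pos hk, ← exp_add, ← le_log_iff_exp_le hx]
  linarith

theorem log_mul_div_rpow_inv {D y C : ℝ} (hD : 0 < D) (hy : 0 < y) (hC : 0 < C) (α : ℝ) :
    log (D * (y / C) ^ α⁻¹) = log D + (log y - log C) / α := by
  rw [log_mul hD.ne' (rpow_pos_of_pos (div_pos hy hC) _).ne', log_rpow (div_pos hy hC),
    log_div hy.ne' hC.ne']
  ring

section
variable {D y C b α : ℝ} (hD : 0 < D) (hy : 0 < y) (hC : 0 < C) (hα : 0 < α)
include hD hy hC hα

theorem log_le_of_mul_div_rpow_inv_le (h : D * (y / C) ^ α⁻¹ ≤ b) :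
    log y ≤ log C + α * (log b - log D) := by
  have := log_le_log (by positivity) h
  rw [log_mul_div_rpow_inv hD hy hC, ← le_sub_iff_add_le', div_le_iff₀ hα] at this
  linarith

theorem le_log_of_le_mul_div_rpow_inv (hb : 0 < b) (h : b ≤ D * (y / C) ^ α⁻¹) :
    log C + α * (log b - log D) ≤ log y := by
  have := log_le_log hb h
  rw [log_mul_div_rpow_inv hD hy hC, ← sub_le_iff_le_add', le_div_iff₀ hα] at this
  linarith

end

section
variable {ι : Type*} {l : Filter ι} {u v : ι → ℝ} {a : ℝ}

theorem isBoundedUnder_le_of_forall_eventually_lt (hu : IsBoundedUnder (· ≤ ·) l u)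
    (h : ∀ c c', c - a < c' → (∀ᶠ i in l, u i < c) → ∀ᶠ i in l, v i < c') :
    IsBoundedUnder (· ≤ ·) l v := by
  obtain ⟨B, hB⟩ := hu
  exact isBoundedUnder_of_eventually_le
    ((h (B + 1) (B + 1 - a + 1) (by linarith)
      ((eventually_map.1 hB).mono fun _ hi => hi.trans_lt (lt_add_one B))).mono fun _ => le_of_lt)

theorem isBoundedUnder_ge_of_forall_eventually_gt (hu : IsBoundedUnder (· ≥ ·) l u)
    (h : ∀ c c', c' < c - a → (∀ᶠ i in l, c < u i) → ∀ᶠ i in l, c' < v i) :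
    IsBoundedUnder (· ≥ ·) l v := by
  obtain ⟨B, hB⟩ := hu
  exact isBoundedUnder_of_eventually_ge
    ((h (B - 1) (B - 1 - a - 1) (by linarith)
      ((eventually_map.1 hB).mono fun _ hi => (sub_one_lt B).trans_le hi)).mono fun _ => le_of_lt)

theorem limsup_le_limsup_sub_of_forall_eventually_lt [l.NeBot] (hu : IsBoundedUnder (· ≤ ·) l u)
    (hv : IsBoundedUnder (· ≥ ·) l v)
    (h : ∀ c c', c - a < c' → (∀ᶠ i in l, u i < c) → ∀ᶠ i in l, v i < c') :
    limsup v l ≤ limsup u l - a := by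
  rw [limsup_le_iff hv.isCoboundedUnder_le (isBoundedUnder_le_of_forall_eventually_lt hu h)]
  intro c' hc'
  obtain ⟨c, hlim, hc⟩ := exists_between (sub_lt_iff_lt_add.1 hc')
  exact h c c' (sub_lt_iff_lt_add.2 hc) (eventually_lt_of_limsup_lt hlim hu)

theorem liminf_sub_le_liminf_of_forall_eventually_gt [l.NeBot] (hu : IsBoundedUnder (· ≥ ·) l u)
    (hv : IsBoundedUnder (· ≤ ·) l v)
    (h : ∀ c c', c' < c - a → (∀ᶠ i in l, c < u i) → ∀ᶠ i in l, c' < v i) :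
    liminf u l - a ≤ liminf v l := by
  rw [le_liminf_iff hv.isCoboundedUnder_ge (isBoundedUnder_ge_of_forall_eventually_gt hu h)]
  intro c' hc'
  obtain ⟨c, hc, hlim⟩ := exists_between (lt_sub_iff_add_lt.1 hc')
  exact h c c' (lt_sub_iff_add_lt.2 hc) (eventually_lt_of_lt_liminf hlim hu)

end

section
variable {θ α : ℝ} (hs : 0 < sin θ) (hα : 1 < α) {Q X Y : ℕ → ℝ}
  (hQ : (fun k : ℕ => Q k - k) =O[atTop] fun _ => (1 : ℝ))
  (hXpos : ∀ k, 1 ≤ k → 0 < X k) (hYpos : ∀ j, 1 ≤ j → 0 < Y j)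
  (hsum : ∀ j, 1 ≤ j → HasSum (fun k => Theta θ (X (k + 1)) (Y j)) (π * Q j))
include hs hα hQ hXpos hYpos hsum

theorem eventually_log_sub_lt_of_eventually_lt (c c' : ℝ)
    (hc : c - α * log (Drift θ α) < c')
    (hX : ∀ᶠ k in atTop, log (X k) - α * log k < c) :
    ∀ᶠ j in atTop, log (Y j) - α * log j < c' := by
  obtain ⟨M, hM⟩ := (hX.and (eventually_ge_atTop 1)).exists_forall_of_atTop
  have hXle : ∀ k ≥ M, X k ≤ exp c * k ^ α := fun k hk =>
    le_exp_mul_rpow_of_log_sub_le (hXpos k (hM k hk).2) (by exact_mod_cast (hM k hk).2)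
      (hM k hk).1.le
  have hlim := ((tendsto_log_add_sub_log hQ (M + 1)).const_mul α).const_add
    (c - α * log (Drift θ α))
  rw [mul_zero, add_zero] at hlim
  filter_upwards [hlim.eventually (gt_mem_nhds hc), eventually_ge_atTop 1] with j hj hj1
  have hY := log_le_of_mul_div_rpow_inv_le (Drift_pos hs hα) (hYpos j hj1) (exp_pos c)
    (zero_lt_one.trans hα)
    (Drift_mul_rpow_inv_le hs hα (hYpos j hj1) (hsum j hj1) (exp_pos c) hXle)
  rw [log_exp, add_assoc] at hY
  linarith

theorem eventually_lt_log_sub_of_eventually_lt (c c' : ℝ)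
    (hc : c' < c - α * log (Drift θ α))
    (hX : ∀ᶠ k in atTop, c < log (X k) - α * log k) :
    ∀ᶠ j in atTop, c' < log (Y j) - α * log j := by
  obtain ⟨M, hM⟩ := (hX.and (eventually_ge_atTop 1)).exists_forall_of_atTop
  have hXge : ∀ k ≥ M, exp c * k ^ α ≤ X k := fun k hk =>
    exp_mul_rpow_le_of_le_log_sub (hXpos k (hM k hk).2) (by exact_mod_cast (hM k hk).2)
      (hM k hk).1.le
  have hlim := ((tendsto_log_add_sub_log hQ (-M)).const_mul α).const_add
    (c - α * log (Drift θ α))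
  rw [mul_zero, add_zero] at hlim
  filter_upwards [hlim.eventually (lt_mem_nhds hc),
    (tendsto_add_div_natCast hQ (-M)).eventually (lt_mem_nhds one_pos),
    eventually_ge_atTop 1] with j hj hQM hj1
  have hQM' : 0 < Q j + -M := (div_pos_iff_of_pos_right (by positivity)).1 hQM
  have hY := le_log_of_le_mul_div_rpow_inv (Drift_pos hs hα) (hYpos j hj1) (exp_pos c)
    (zero_lt_one.trans hα) hQM'
    (by linarith [le_add_Drift_mul_rpow_inv hs hα (hYpos j hj1) (hsum j hj1) (exp_pos c) hXge])
  rw [log_exp] at hY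
  linarith

end

theorem stmt_11 (θ : ℝ) (hθ : 0 < θ) (hθπ : θ < Real.pi)
    (Q : ℕ → ℝ) (hQpos : ∀ k, 1 ≤ k → 0 < Q k)
    (hQ : (fun k : ℕ => Q k - (k : ℝ)) =O[atTop] fun _ : ℕ => (1 : ℝ))
    (α : ℝ) (hα : 1 < α)
    (X Y : ℕ → ℝ) (hXpos : ∀ k, 1 ≤ k → 0 < X k) (hYpos : ∀ j, 1 ≤ j → 0 < Y j)
    (hX : (fun k : ℕ => Real.log (X k) - α * Real.log k) =O[atTop] fun _ : ℕ => (1 : ℝ))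
    (hfix : ∀ j, 1 ≤ j → phi θ X Y j = ENNReal.ofReal (Q j)) :
    Filter.limsup (fun j : ℕ => Real.log (Y j) - α * Real.log j) atTop ≤
      Filter.limsup (fun k : ℕ => Real.log (X k) - α * Real.log k) atTop -
        α * Real.log (Drift θ α) ∧
    Filter.liminf (fun k : ℕ => Real.log (X k) - α * Real.log k) atTop -
        α * Real.log (Drift θ α) ≤
      Filter.liminf (fun j : ℕ => Real.log (Y j) - α * Real.log j) atTop := by
  have hs := sin_pos_of_pos_of_lt_pi hθ hθπ
  have hsum (j : ℕ) (hj : 1 ≤ j) : HasSum (fun k => Theta θ (X (k + 1)) (Y j)) (π * Q j) :=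
    hasSum_of_phi_eq_ofReal (hQpos j hj).le (fun _ => (Theta_pos hs _ (hYpos j hj)).le)
      (hfix j hj)
  obtain ⟨hXle, hXge⟩ := isBoundedUnder_le_abs.1 ((isBigO_one_iff ℝ).1 hX)
  have hup := eventually_log_sub_lt_of_eventually_lt hs hα hQ hXpos hYpos hsum
  have hlo := eventually_lt_log_sub_of_eventually_lt hs hα hQ hXpos hYpos hsum
  exact ⟨limsup_le_limsup_sub_of_forall_eventually_lt hXle
      (isBoundedUnder_ge_of_forall_eventually_gt hXge hlo) hup,
    liminf_sub_le_liminf_of_forall_eventually_gt hXge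
      (isBoundedUnder_le_of_forall_eventually_lt hXle hup) hlo⟩
end

section
/- For every sequence X of positive reals and every k ≥ 1, Σ_{j=1}^{k} φ_j(X,X) > θ·k²/(2π). Consequently, if there exists k ≥ 1 with Σ_{j=1}^{k} Q_j ≤ θ·k²/(2π), then there is no sequence X of positive reals with φ_j(X,X) = Q_j for all j ≥ 1. -/
open Filter Asymptotics MeasureTheory
open scoped ENNReal Topology

/-!
Reflecting `E' + E·e^{iθ}` in the line of argument `θ/2` gives `E + E'·e^{iθ}`, so
`Θ(a, b) + Θ(b, a) = θ`. Hence the `k × k` block `∑_{j,m ≤ k} Θ(X_m, X_j)` of the double series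
equals `θ k² / 2` exactly, and the remaining terms `Θ(X_m, X_j)` with `m > k` are positive.
-/

open Finset
open scoped ComplexConjugate

section Theta

variable {θ a b : ℝ}

lemma im_add_mul_exp_mul_I :
    ((a : ℂ) + b * Complex.exp (θ * Complex.I)).im = b * Real.sin θ := by
  simp [Complex.exp_mul_I, ← Complex.ofReal_cos, ← Complex.ofReal_sin]

lemma im_add_mul_exp_mul_I_pos (hθ : 0 < θ) (hθπ : θ < Real.pi) (hb : 0 < b) :
    0 < ((a : ℂ) + b * Complex.exp (θ * Complex.I)).im := by
  rw [im_add_mul_exp_mul_I]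
  exact mul_pos hb (Real.sin_pos_of_pos_of_lt_pi hθ hθπ)

lemma Theta_pos_s19 (hθ : 0 < θ) (hθπ : θ < Real.pi) (hb : 0 < b) : 0 < Theta θ a b := by
  have him := im_add_mul_exp_mul_I_pos (a := a) hθ hθπ hb
  refine (Complex.arg_nonneg_iff.2 him.le).lt_of_ne fun h => him.ne' ?_
  exact (Complex.arg_eq_zero_iff.1 h.symm).2

lemma Theta_add_Theta_swap (hθ : 0 < θ) (hθπ : θ < Real.pi) (hb : 0 < b) :
    Theta θ a b + Theta θ b a = θ := by
  set z : ℂ := (a : ℂ) + b * Complex.exp (θ * Complex.I)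
  have him : 0 < z.im := im_add_mul_exp_mul_I_pos hθ hθπ hb
  have hz : z ≠ 0 := fun h => by simp [h] at him
  have hswap :
      (b : ℂ) + a * Complex.exp (θ * Complex.I) = Complex.exp (θ * Complex.I) * conj z := by
    have hexp : Complex.exp (θ * Complex.I) * conj (Complex.exp (θ * Complex.I)) = 1 := by
      rw [← Complex.exp_conj, ← Complex.exp_add]; simp
    simp only [z, map_add, map_mul, Complex.conj_ofReal]
    linear_combination -(b : ℂ) * hexp
  have hangle : (Theta θ b a : Real.Angle) = (θ - Theta θ a b : ℝ) := by
    rw [Theta, hswap, Complex.arg_mul_coe_angle (Complex.exp_ne_zero _) ((map_ne_zero _).2 hz),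
      Complex.arg_conj_coe_angle, Complex.arg_exp_mul_I, Real.Angle.coe_toIocMod]
    simp [Theta, z, sub_eq_add_neg]
  have hnonneg : 0 ≤ Theta θ a b := Complex.arg_nonneg_iff.2 him.le
  have hle : Theta θ a b ≤ Real.pi := Complex.arg_le_pi _
  have hswapped : Theta θ b a = ((θ - Theta θ a b : ℝ) : Real.Angle).toReal :=
    Complex.arg_coe_angle_eq_iff_eq_toReal.1 hangle
  rw [hswapped, Real.Angle.toReal_coe_eq_self_iff.2 ⟨by linarith, by linarith⟩]
  ring

end Theta

lemma Finset.sum_sum_eq_of_add_swap {ι R : Type*} [Field R] [CharZero R] (s : Finset ι)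
    {f : ι → ι → R} {c : R} (h : ∀ i ∈ s, ∀ j ∈ s, f i j + f j i = c) :
    ∑ i ∈ s, ∑ j ∈ s, f i j = c * (#s : R) ^ 2 / 2 := by
  have hsymm : ∑ i ∈ s, ∑ j ∈ s, (f i j + f j i) = 2 * ∑ i ∈ s, ∑ j ∈ s, f i j := by
    simp only [sum_add_distrib]
    rw [sum_comm (f := fun i j => f j i)]
    ring
  rw [sum_congr rfl fun i hi => sum_congr rfl fun j hj => h i hi j hj] at hsymm
  simp only [sum_const, nsmul_eq_mul] at hsymm
  linear_combination -hsymm / 2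

lemma ENNReal.sum_range_lt_tsum {a : ℕ → ℝ≥0∞} {k : ℕ} (hfin : ∑ i ∈ range k, a i ≠ ∞)
    (hk : a k ≠ 0) : ∑ i ∈ range k, a i < ∑' i, a i :=
  calc ∑ i ∈ range k, a i < ∑ i ∈ range (k + 1), a i := by
        rw [sum_range_succ]; exact ENNReal.lt_add_right hfin hk
    _ ≤ ∑' i, a i := ENNReal.sum_le_tsum _

section phi

variable {θ : ℝ}

lemma phi_pos (hθ : 0 < θ) (hθπ : θ < Real.pi) {X Y : ℕ → ℝ} {j : ℕ} (hY : 0 < Y j) :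
    0 < phi θ X Y j := by
  refine ENNReal.mul_pos (by simp [Real.pi_pos]) (ne_of_gt ?_)
  exact (ENNReal.ofReal_pos.2 (Theta_pos_s19 hθ hθπ hY)).trans_le (ENNReal.le_tsum 0)

lemma ofReal_lt_sum_phi_self (hθ : 0 < θ) (hθπ : θ < Real.pi) {X : ℕ → ℝ}
    (hX : ∀ k, 1 ≤ k → 0 < X k) {k : ℕ} (hk : 1 ≤ k) :
    ENNReal.ofReal (θ * (k : ℝ) ^ 2 / (2 * Real.pi)) < ∑ j ∈ range k, phi θ X X (j + 1) := by
  set f : ℕ → ℕ → ℝ := fun j m => Theta θ (X (m + 1)) (X (j + 1))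
  have hf : ∀ j m, 0 < f j m := fun j m => Theta_pos_s19 hθ hθπ (hX _ (Nat.le_add_left 1 j))
  have hblock : ∑ j ∈ range k, ∑ m ∈ range k, f j m = θ * (k : ℝ) ^ 2 / 2 := by
    simpa using sum_sum_eq_of_add_swap (range k) fun j _ m _ =>
      Theta_add_Theta_swap (a := X (m + 1)) hθ hθπ (hX _ (Nat.le_add_left 1 j))
  calc ENNReal.ofReal (θ * (k : ℝ) ^ 2 / (2 * Real.pi))
      = ENNReal.ofReal (1 / Real.pi) * ∑ j ∈ range k, ∑ m ∈ range k, ENNReal.ofReal (f j m) := by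
        simp_rw [← ENNReal.ofReal_sum_of_nonneg fun _ _ => (hf _ _).le,
          ← ENNReal.ofReal_sum_of_nonneg fun _ _ => sum_nonneg fun _ _ => (hf _ _).le, hblock,
          ← ENNReal.ofReal_mul (by positivity : (0 : ℝ) ≤ 1 / Real.pi)]
        congr 1
        field_simp
    _ < ENNReal.ofReal (1 / Real.pi) * ∑ j ∈ range k, ∑' m, ENNReal.ofReal (f j m) := by
        refine ENNReal.mul_lt_mul_right (ENNReal.ofReal_pos.2 (by positivity)).ne'
          ENNReal.ofReal_ne_top
          (ENNReal.sum_lt_sum_of_nonempty (nonempty_range_iff.2 (Nat.one_le_iff_ne_zero.1 hk))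
            fun j _ => ?_)
        exact ENNReal.sum_range_lt_tsum (ENNReal.sum_ne_top.2 fun _ _ => ENNReal.ofReal_ne_top)
          (ENNReal.ofReal_pos.2 (hf j k)).ne'
    _ = ∑ j ∈ range k, phi θ X X (j + 1) := by
        rw [mul_sum]; rfl

end phi

theorem stmt_19_general (θ : ℝ) (hθ : 0 < θ) (hθπ : θ < Real.pi)
    (Q : ℕ → ℝ) :
    (∀ X : ℕ → ℝ, (∀ k, 1 ≤ k → 0 < X k) → ∀ k : ℕ, 1 ≤ k →
      ENNReal.ofReal (θ * (k : ℝ) ^ 2 / (2 * Real.pi)) <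
        ∑ j ∈ Finset.range k, phi θ X X (j + 1)) ∧
    ((∃ k : ℕ, 1 ≤ k ∧ ∑ j ∈ Finset.range k, Q (j + 1) ≤ θ * (k : ℝ) ^ 2 / (2 * Real.pi)) →
      ¬ ∃ X : ℕ → ℝ, (∀ k, 1 ≤ k → 0 < X k) ∧
        ∀ j, 1 ≤ j → phi θ X X j = ENNReal.ofReal (Q j)) := by
  refine ⟨fun X hX k hk => ofReal_lt_sum_phi_self hθ hθπ hX hk, ?_⟩
  rintro ⟨k, hk, hQk⟩ ⟨X, hX, hphi⟩
  have hQ : ∀ j, 0 ≤ Q (j + 1) := fun j => (ENNReal.ofReal_pos.1 <|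
    hphi (j + 1) (Nat.le_add_left 1 j) ▸ phi_pos hθ hθπ (hX _ (Nat.le_add_left 1 j))).le
  have hlt := ofReal_lt_sum_phi_self hθ hθπ hX hk
  rw [sum_congr rfl fun j _ => hphi (j + 1) (Nat.le_add_left 1 j),
    ← ENNReal.ofReal_sum_of_nonneg fun j _ => hQ j] at hlt
  exact (ENNReal.ofReal_le_ofReal hQk).not_gt hlt

theorem stmt_19 (θ : ℝ) (hθ : 0 < θ) (hθπ : θ < Real.pi)
    (Q : ℕ → ℝ) (hQpos : ∀ k, 1 ≤ k → 0 < Q k) :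
    (∀ X : ℕ → ℝ, (∀ k, 1 ≤ k → 0 < X k) → ∀ k : ℕ, 1 ≤ k →
      ENNReal.ofReal (θ * (k : ℝ) ^ 2 / (2 * Real.pi)) <
        ∑ j ∈ Finset.range k, phi θ X X (j + 1)) ∧
    ((∃ k : ℕ, 1 ≤ k ∧ ∑ j ∈ Finset.range k, Q (j + 1) ≤ θ * (k : ℝ) ^ 2 / (2 * Real.pi)) →
      ¬ ∃ X : ℕ → ℝ, (∀ k, 1 ≤ k → 0 < X k) ∧
        ∀ j, 1 ≤ j → phi θ X X j = ENNReal.ofReal (Q j)) :=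
  stmt_19_general θ hθ hθπ Q
end
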